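/- Let G be a finite graph, α its independence number, and suppose there is a constant M such that for every induced subgraph H of G and every maximum independent set Γ of H, the number of vertices of H outside Γ with at most two neighbors in Γ is at most M. Then for any W ⊆ V(G) with |W| = l, the number of edges induced on W is at least Σ_{i=1}^{⌊l/α⌋} (3(l − iα) − 2M). -/

import Mathlib

/-!
Remove a maximum independent set `Γ` of `W`. By maximality every vertex of `W \ Γ` has a
neighbour in `Γ`, and by hypothesis all but at most `M` of them have at least three, so at
least `3 |W \ Γ| - 2M ≥ 3 (|W| - α) - 2M` edges join `W \ Γ` to `Γ`. Iterating on `W \ Γ`,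
whose size is at least `|W| - α`, gives the `i`-th summand at the `i`-th step.
-/

/-- The Johnson-type graph `G(n,r,s)`: vertices are the `r`-element subsets of
`{1,…,n}` (modeled as `Finset (Fin n)` of cardinality `r`), two distinct vertices
adjacent iff their intersection has size exactly `s`. -/
def johnson (n r s : ℕ) : SimpleGraph {A : Finset (Fin n) // A.card = r} where
  Adj A B := A ≠ B ∧ (A.1 ∩ B.1).card = s
  symm := by
    constructor
    intro A B h
    exact ⟨h.1.symm, by rw [Finset.inter_comm]; exact h.2⟩
  loopless := by constructor; intro A h; exact h.1 rfl

instance (n r s : ℕ) : DecidableRel (johnson n r s).Adj := fun A B =>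
  inferInstanceAs (Decidable (A ≠ B ∧ (A.1 ∩ B.1).card = s))

/-- `Γ` is an independent set of vertices in `G`. -/
def IsIndep {V : Type*} (G : SimpleGraph V) (Γ : Finset V) : Prop :=
  ∀ x ∈ Γ, ∀ y ∈ Γ, ¬ G.Adj x y

/-- The number of edges of `G` with both endpoints in `W`. -/
def edgeCount {V : Type*} [DecidableEq V] (G : SimpleGraph V) [DecidableRel G.Adj]
    (W : Finset V) : ℕ :=
  ((W ×ˢ W).filter fun p => G.Adj p.1 p.2).card / 2

open Finset

section PairCount

variable {V : Type*} (G : SimpleGraph V) [DecidableRel G.Adj]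

def pairCount (s t : Finset V) : ℕ :=
  ((s ×ˢ t).filter fun p => G.Adj p.1 p.2).card

lemma pairCount_eq_sum (s t : Finset V) :
    pairCount G s t = ∑ b ∈ t, (s.filter fun a => G.Adj a b).card := by
  simp only [pairCount, card_filter, sum_product]
  exact sum_comm

lemma pairCount_comm (s t : Finset V) : pairCount G s t = pairCount G t s := by
  simp only [pairCount_eq_sum, card_filter]
  rw [sum_comm]
  simp only [G.adj_comm]

variable [DecidableEq V]

lemma pairCount_union_right (s : Finset V) {t t' : Finset V} (h : Disjoint t t') :
    pairCount G s (t ∪ t') = pairCount G s t + pairCount G s t' := by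
  simp only [pairCount_eq_sum, sum_union h]

lemma pairCount_union_left {s s' : Finset V} (t : Finset V) (h : Disjoint s s') :
    pairCount G (s ∪ s') t = pairCount G s t + pairCount G s' t := by
  rw [pairCount_comm, pairCount_union_right G t h, pairCount_comm, pairCount_comm G t]

lemma edgeCount_sdiff_add_pairCount_le {W Γ : Finset V} (hΓ : Γ ⊆ W) :
    edgeCount G (W \ Γ) + pairCount G Γ (W \ Γ) ≤ edgeCount G W := by
  have hd : Disjoint (W \ Γ) Γ := sdiff_disjoint
  have hsplit : pairCount G W W = pairCount G (W \ Γ) (W \ Γ) + 2 * pairCount G Γ (W \ Γ)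
      + pairCount G Γ Γ := by
    conv_lhs => rw [← sdiff_union_of_subset hΓ]
    rw [pairCount_union_left G _ hd, pairCount_union_right G _ hd,
      pairCount_union_right G _ hd, pairCount_comm G (W \ Γ) Γ]
    ring
  change pairCount G (W \ Γ) (W \ Γ) / 2 + _ ≤ pairCount G W W / 2
  omega

end PairCount

section MaxIndep

variable {V : Type*} (G : SimpleGraph V)

def IsMaxIndepIn (W Γ : Finset V) : Prop :=
  Γ ⊆ W ∧ IsIndep G Γ ∧ ∀ Γ' ⊆ W, IsIndep G Γ' → Γ'.card ≤ Γ.card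

lemma exists_isMaxIndepIn (W : Finset V) : ∃ Γ, IsMaxIndepIn G W Γ := by
  classical
  obtain ⟨Γ, hΓ, hmax⟩ :=
    (W.powerset.filter (IsIndep G)).exists_max_image card ⟨∅, by simp [IsIndep]⟩
  simp only [mem_filter, mem_powerset] at hΓ hmax
  exact ⟨Γ, hΓ.1, hΓ.2, fun Γ' h h' => hmax Γ' ⟨h, h'⟩⟩

variable [DecidableEq V]

lemma IsIndep.insert {Γ : Finset V} {w : V} (hΓ : IsIndep G Γ) (hw : ∀ x ∈ Γ, ¬G.Adj x w) :
    IsIndep G (insert w Γ) := by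
  intro x hx y hy
  rw [mem_insert] at hx hy
  rcases hx with rfl | hx <;> rcases hy with rfl | hy
  · exact G.irrefl
  · exact fun h => hw y hy h.symm
  · exact hw x hx
  · exact hΓ x hx y hy

lemma IsMaxIndepIn.exists_adj {W Γ : Finset V} (h : IsMaxIndepIn G W Γ) {w : V}
    (hw : w ∈ W \ Γ) : ∃ x ∈ Γ, G.Adj x w := by
  obtain ⟨hwW, hwΓ⟩ := mem_sdiff.1 hw
  by_contra! hno
  have := h.2.2 _ (insert_subset hwW h.1) (h.2.1.insert G hno)
  rw [card_insert_of_notMem hwΓ] at this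
  omega

variable [DecidableRel G.Adj]

lemma IsMaxIndepIn.three_mul_card_sdiff_le_pairCount_add {W Γ : Finset V}
    (h : IsMaxIndepIn G W Γ) :
    3 * (W \ Γ).card ≤ pairCount G Γ (W \ Γ)
      + 2 * ((W \ Γ).filter fun w => (Γ.filter fun x => G.Adj x w).card ≤ 2).card := by
  rw [pairCount_eq_sum, card_filter, mul_sum, ← sum_add_distrib, card_eq_sum_ones, mul_sum]
  -- pointwise: a degree `d ≥ 1` into `Γ` satisfies `3 ≤ d + 2 * [d ≤ 2]`
  refine sum_le_sum fun w hw => ?_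
  obtain ⟨x, hx, hadj⟩ := h.exists_adj G hw
  have : 0 < (Γ.filter fun x => G.Adj x w).card := card_pos.2 ⟨x, mem_filter.2 ⟨hx, hadj⟩⟩
  split_ifs <;> omega

end MaxIndep

section EdgeBound

variable {V : Type*} [DecidableEq V] (G : SimpleGraph V) [DecidableRel G.Adj] (α M : ℕ)

lemma exists_card_le_and_edgeCount_sdiff_add_le
    (hα_max : ∀ Γ : Finset V, IsIndep G Γ → Γ.card ≤ α)
    (W : Finset V) (hM : ∀ Γ, IsMaxIndepIn G W Γ →
      ((W \ Γ).filter fun w => (Γ.filter fun x => G.Adj x w).card ≤ 2).card ≤ M) :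
    ∃ Γ ⊆ W, Γ.card ≤ α ∧
      3 * ((W.card : ℤ) - α) - 2 * M + edgeCount G (W \ Γ) ≤ edgeCount G W := by
  obtain ⟨Γ, h⟩ := exists_isMaxIndepIn G W
  have hΓα := hα_max Γ h.2.1
  have hcross := h.three_mul_card_sdiff_le_pairCount_add G
  have hfew := hM Γ h
  have hsplit := edgeCount_sdiff_add_pairCount_le G h.1
  have hcard := card_sdiff_of_subset h.1
  have hΓW := card_le_card h.1
  exact ⟨Γ, h.1, hΓα, by omega⟩

lemma sum_range_le_edgeCount
    (hstep : ∀ W : Finset V, ∃ Γ ⊆ W, Γ.card ≤ α ∧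
      3 * ((W.card : ℤ) - α) - 2 * M + edgeCount G (W \ Γ) ≤ edgeCount G W)
    (q : ℕ) (W : Finset V) (L : ℤ) (hL : L ≤ W.card) :
    ∑ i ∈ range q, (3 * (L - (i + 1) * α) - 2 * M) ≤ (edgeCount G W : ℤ) := by
  induction q generalizing W L with
  | zero => simp
  | succ q ih =>
    obtain ⟨Γ, hΓW, hΓα, hW⟩ := hstep W
    have hrest := ih (W \ Γ) (L - α) (by rw [card_sdiff_of_subset hΓW]; omega)
    have hshift : ∑ i ∈ range q, (3 * (L - ((i + 1 : ℕ) + 1) * α) - 2 * M)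
        = ∑ i ∈ range q, (3 * (L - α - (i + 1) * α) - 2 * M) :=
      sum_congr rfl fun i _ => by push_cast; ring
    rw [sum_range_succ', hshift]
    push_cast at hW ⊢
    linarith

end EdgeBound

theorem stmt9_general {V : Type*} [DecidableEq V] (G : SimpleGraph V)
    [DecidableRel G.Adj] (α M : ℕ)
    (hα_max : ∀ Γ : Finset V, IsIndep G Γ → Γ.card ≤ α)
    (hM : ∀ W' : Finset V, ∀ Γ ⊆ W', IsIndep G Γ →
      (∀ Γ' ⊆ W', IsIndep G Γ' → Γ'.card ≤ Γ.card) →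
      ((W' \ Γ).filter (fun w => (Γ.filter (fun x => G.Adj x w)).card ≤ 2)).card ≤ M)
    (W : Finset V) (l : ℕ) (hW : W.card = l) :
    (∑ i ∈ Finset.Icc 1 (l / α), (3 * ((l : ℤ) - (i : ℤ) * α) - 2 * M))
      ≤ (edgeCount G W : ℤ) := by
  have h := sum_range_le_edgeCount G α M
    (fun W' => exists_card_le_and_edgeCount_sdiff_add_le G α M hα_max W'
      fun Γ hΓ => hM W' Γ hΓ.1 hΓ.2.1 hΓ.2.2) (l / α) W l (by rw [hW])
  rw [← Ico_add_one_right_eq_Icc, sum_Ico_eq_sum_range, Nat.add_sub_cancel]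
  convert h using 3 with i
  push_cast
  ring

theorem stmt9 {V : Type*} [Fintype V] [DecidableEq V] (G : SimpleGraph V)
    [DecidableRel G.Adj] (α M : ℕ)
    (hα_ex : ∃ Γ : Finset V, IsIndep G Γ ∧ Γ.card = α)
    (hα_max : ∀ Γ : Finset V, IsIndep G Γ → Γ.card ≤ α)
    (hM : ∀ W' : Finset V, ∀ Γ ⊆ W', IsIndep G Γ →
      (∀ Γ' ⊆ W', IsIndep G Γ' → Γ'.card ≤ Γ.card) →
      ((W' \ Γ).filter (fun w => (Γ.filter (fun x => G.Adj x w)).card ≤ 2)).card ≤ M)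
    (W : Finset V) (l : ℕ) (hW : W.card = l) :
    (∑ i ∈ Finset.Icc 1 (l / α), (3 * ((l : ℤ) - (i : ℤ) * α) - 2 * M))
      ≤ (edgeCount G W : ℤ) :=
  stmt9_general G α M hα_max hM W l hW
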